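/- arXiv:2104.14263 — 6 statements merged into one kernel-verified Lean document; each statement's English description precedes it below -/
import Mathlib

section
/- Let P be a poset, W a Stone space with Boolean ring R of compact open subsets, and {X_p | p ∈ P} a semi-trim P-partition of W. Let A ∈ R be nonempty and let F be the set of minimal elements of T(A). Then F is finite and there is a finite partition {B_p | p ∈ F} of A into sets of R such that B_p is p-trim for each p ∈ F. -/
/-!
Compactness and the neighbourhood bases of trim sets give `A = ⋃_{p ∈ L} U_p` with `L` finite and
`U_p` `p`-trim. Hence `T(A)` is the upper closure of `L`, and its minimal elements `F` are those
of `L`; grouping the `U_p` under some `q ∈ F` below `p` gives compact open `V_q` of type `≥ q`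
covering `A`. Now treat the labels of `F` one at a time: condition (ii) gives a `q`-trim `C ⊆ A`,
`B_q := C ∪ V_q` is still `q`-trim, and as `F` is an antichain the remaining labels of `F` still
occur in `A \ B_q`, where we recurse.
-/

open Set

variable {P W : Type*} [PartialOrder P] [TopologicalSpace W]

/-- The type `T(Y)` of `Y`. -/
def ptype (X : P → Set W) (Y : Set W) : Set P :=
  {p | (Y ∩ X p).Nonempty}

def IsTrimSet (X : P → Set W) (p : P) (A : Set W) : Prop :=
  IsCompact A ∧ IsOpen A ∧ ptype X A = Ici p

/-- The set `P̂`. -/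
def trimHat (X : P → Set W) : Set P :=
  {p | ∃ A, IsTrimSet X p A}

structure IsPPartition (X : P → Set W) : Prop where
  nonempty : ∀ p, (X p).Nonempty
  pairwise_disjoint : Pairwise fun p q => Disjoint (X p) (X q)

structure IsSemiTrim (X : P → Set W) extends IsPPartition X : Prop where
  nhds_base : ∀ w : W, ∀ U ∈ nhds w, ∃ p A, IsTrimSet X p A ∧ w ∈ A ∧ A ⊆ U
  trim_dense : ∀ A : Set W, IsOpen A → ∀ p ∈ ptype X A ∩ trimHat X,
    ∃ B ⊆ A, IsTrimSet X p B
  label_sup : ∀ p, ∀ x ∈ X p, IsLUB {q | ∃ A, IsTrimSet X q A ∧ x ∈ A} p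
  full : ∀ p : P, ∀ w : W,
    (∀ U ∈ nhds w, ∃ A, IsTrimSet X p A ∧ w ∈ A ∧ A ⊆ U) → w ∈ X p

theorem minimal_mem_upperClosure_iff {α : Type*} [PartialOrder α] {s : Set α} {x : α} :
    Minimal (· ∈ (upperClosure s : Set α)) x ↔ Minimal (· ∈ s) x := by
  simp only [SetLike.mem_coe, mem_upperClosure]
  constructor
  · intro hx
    obtain ⟨a, has, hax⟩ := hx.prop
    obtain rfl := hx.eq_of_ge ⟨a, has, le_rfl⟩ hax
    exact ⟨has, fun b hbs hbx => hx.le_of_le ⟨b, hbs, le_rfl⟩ hbx⟩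
  · intro hx
    refine ⟨⟨x, hx.prop, le_rfl⟩, fun b ⟨a, has, hab⟩ hbx => ?_⟩
    exact (hx.le_of_le has (hab.trans hbx)).trans hab

section PType

variable {α β : Type*} (X : α → Set β)

lemma ptype_mono {Y Z : Set β} (h : Y ⊆ Z) : ptype X Y ⊆ ptype X Z :=
  fun _ ⟨w, hwY, hwX⟩ => ⟨w, h hwY, hwX⟩

lemma ptype_union (Y Z : Set β) : ptype X (Y ∪ Z) = ptype X Y ∪ ptype X Z := by
  ext p
  simp [ptype, union_inter_distrib_right]

lemma ptype_iUnion {ι : Sort*} (U : ι → Set β) : ptype X (⋃ i, U i) = ⋃ i, ptype X (U i) := by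
  ext p
  simp [ptype, iUnion_inter]

end PType

section SemiTrim

variable {X : P → Set W}

lemma IsTrimSet.union {p : P} {B C : Set W} (hB : IsTrimSet X p B) (hCc : IsCompact C)
    (hCo : IsOpen C) (hC : ptype X C ⊆ Ici p) : IsTrimSet X p (B ∪ C) :=
  ⟨hB.1.union hCc, hB.2.1.union hCo, by rw [ptype_union, hB.2.2, union_eq_left.2 hC]⟩

lemma IsTrimSet.biUnion {ι : Type*} {p : P} {s : Finset ι} {U : ι → Set W} (hs : s.Nonempty)
    (hU : ∀ i ∈ s, IsTrimSet X p (U i)) : IsTrimSet X p (⋃ i ∈ s, U i) := by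
  refine ⟨s.isCompact_biUnion fun i hi => (hU i hi).1, isOpen_biUnion fun i hi => (hU i hi).2.1,
    ?_⟩
  obtain ⟨i, hi⟩ := hs
  simp only [ptype_iUnion]
  exact subset_antisymm (iUnion₂_subset fun j hj => (hU j hj).2.2.le)
    ((hU i hi).2.2 ▸ subset_biUnion_of_mem (u := fun j => ptype X (U j)) hi)

lemma IsTrimSet.mem_ptype_sdiff {q r : P} {A B : Set W} (hB : IsTrimSet X q B)
    (hr : r ∈ ptype X A) (hqr : ¬ q ≤ r) : r ∈ ptype X (A \ B) := by
  obtain ⟨w, hwA, hwr⟩ := hr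
  exact ⟨w, ⟨hwA, fun hwB => hqr (hB.2.2 ▸ ⟨w, hwB, hwr⟩ : r ∈ Ici q)⟩, hwr⟩

lemma IsSemiTrim.exists_trim_cover (h : IsSemiTrim X) {A : Set W} (hAc : IsCompact A)
    (hAo : IsOpen A) :
    ∃ (L : Finset P) (U : P → Set W), (∀ p ∈ L, IsTrimSet X p (U p)) ∧ ⋃ p ∈ L, U p = A := by
  classical
  choose p U hU hxU hUA using fun x : A => h.nhds_base x A (hAo.mem_nhds x.2)
  obtain ⟨t, ht⟩ := hAc.elim_finite_subcover U (fun x => (hU x).2.1)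
    fun w hw => mem_iUnion.2 ⟨⟨w, hw⟩, hxU ⟨w, hw⟩⟩
  refine ⟨t.image p, fun q => ⋃ x ∈ t.filter (p · = q), U x, ?_, ?_⟩
  · intro q hq
    obtain ⟨x, hxt, rfl⟩ := Finset.mem_image.1 hq
    exact IsTrimSet.biUnion ⟨x, Finset.mem_filter.2 ⟨hxt, rfl⟩⟩
      fun y hy => (Finset.mem_filter.1 hy).2 ▸ hU y
  · refine subset_antisymm (iUnion₂_subset fun q _ => iUnion₂_subset fun x _ => hUA x) ?_
    intro w hw
    obtain ⟨x, hxt, hwx⟩ := mem_iUnion₂.1 (ht hw)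
    exact mem_biUnion (Finset.mem_image_of_mem p hxt)
      (mem_biUnion (Finset.mem_filter.2 ⟨hxt, rfl⟩) hwx)

lemma IsSemiTrim.exists_trim_partition_of_cover [T2Space W] (h : IsSemiTrim X) {G : Set P}
    (hG : G.Finite) (hGa : IsAntichain (· ≤ ·) G) (hGhat : G ⊆ trimHat X) {A : Set W}
    {V : P → Set W} (hV : ∀ q ∈ G, IsCompact (V q) ∧ IsOpen (V q) ∧ ptype X (V q) ⊆ Ici q)
    (hVA : ⋃ q ∈ G, V q = A) (hGA : G ⊆ ptype X A) :
    ∃ B : P → Set W, (∀ q ∈ G, IsTrimSet X q (B q)) ∧ G.PairwiseDisjoint B ∧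
      ⋃ q ∈ G, B q = A := by
  classical
  induction G, hG using Set.Finite.induction_on generalizing A V with
  | empty => exact ⟨fun _ => ∅, by simp, by simp, by simpa using hVA⟩
  | @insert q G hqG _ ih =>
    have hAo : IsOpen A := hVA ▸ isOpen_biUnion fun r hr => (hV r hr).2.1
    obtain ⟨C, hCA, hC⟩ := h.trim_dense A hAo q ⟨hGA (mem_insert q G), hGhat (mem_insert q G)⟩
    have hVqA : V q ⊆ A := hVA ▸ subset_biUnion_of_mem (u := V) (mem_insert q G)
    set Bq := C ∪ V q
    obtain ⟨hVqc, hVqo, hVqT⟩ := hV q (mem_insert q G)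
    have hBq : IsTrimSet X q Bq := hC.union hVqc hVqo hVqT
    have hBqA : Bq ⊆ A := union_subset hCA hVqA
    obtain ⟨B, hBtrim, hBdisj, hBA⟩ := ih (hGa.subset (subset_insert q G))
      ((subset_insert q G).trans hGhat) (A := A \ Bq) (V := fun r => V r \ Bq)
      (fun r hr => by
        obtain ⟨hc, ho, ht⟩ := hV r (mem_insert_of_mem q hr)
        exact ⟨hc.diff hBq.2.1, ho.sdiff hBq.1.isClosed, (ptype_mono X sdiff_subset).trans ht⟩)
      (by
        rw [← hVA, biUnion_insert, union_sdiff_distrib, sdiff_eq_empty.2 subset_union_right,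
          empty_union]
        simp only [iUnion_sdiff])
      fun r hr => hBq.mem_ptype_sdiff (hGA (mem_insert_of_mem q hr)) <|
        hGa (mem_insert q G) (mem_insert_of_mem q hr) (ne_of_mem_of_not_mem hr hqG).symm
    have hupd : ∀ r ∈ G, Function.update B q Bq r = B r :=
      fun r hr => Function.update_of_ne (ne_of_mem_of_not_mem hr hqG) _ _
    refine ⟨Function.update B q Bq, ?_, ?_, ?_⟩
    · rintro r (rfl | hr)
      · rwa [Function.update_self]
      · rw [hupd r hr]
        exact hBtrim r hr
    · refine (pairwiseDisjoint_insert_of_notMem hqG).2 ⟨fun r hr s hs hrs => ?_, fun r hr => ?_⟩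
      · simpa only [Function.onFun, hupd r hr, hupd s hs] using hBdisj hr hs hrs
      · rw [Function.update_self, hupd r hr]
        exact disjoint_sdiff_right.mono_right (hBA ▸ subset_biUnion_of_mem (u := B) hr)
    · rw [biUnion_insert, Function.update_self, iUnion₂_congr hupd, hBA, union_sdiff_cancel hBqA]

lemma ptype_eq_upperClosure_of_trim_cover {L : Finset P} {U : P → Set W} {A : Set W}
    (hU : ∀ p ∈ L, IsTrimSet X p (U p)) (hUA : ⋃ p ∈ L, U p = A) :
    ptype X A = upperClosure (L : Set P) := by
  rw [← hUA, coe_upperClosure]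
  simp only [ptype_iUnion, Finset.mem_coe]
  exact iUnion₂_congr fun p hp => (hU p hp).2.2

lemma IsSemiTrim.exists_trim_partition_of_trim_cover [T2Space W] (h : IsSemiTrim X)
    {L : Finset P} {U : P → Set W} {A : Set W} (hU : ∀ p ∈ L, IsTrimSet X p (U p))
    (hUA : ⋃ p ∈ L, U p = A) :
    ∃ B : P → Set W, (∀ q ∈ {q | Minimal (· ∈ (L : Set P)) q}, IsTrimSet X q (B q)) ∧
      {q | Minimal (· ∈ (L : Set P)) q}.PairwiseDisjoint B ∧
      ⋃ q ∈ {q | Minimal (· ∈ (L : Set P)) q}, B q = A := by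
  classical
  have hUA' : ∀ p ∈ L, U p ⊆ A := fun p hp => hUA ▸ subset_biUnion_of_mem (u := U) hp
  refine h.exists_trim_partition_of_cover (L.finite_toSet.subset (setOfPred_minimal_subset _))
    (setOfPred_minimal_antichain _) (fun q hq => ⟨U q, hU q hq.prop⟩)
    (V := fun q => ⋃ p ∈ L.filter (q ≤ ·), U p) (fun q _ => ⟨?_, ?_, ?_⟩) ?_ ?_
  · exact Finset.isCompact_biUnion _ fun p hp => (hU p (Finset.mem_filter.1 hp).1).1
  · exact isOpen_biUnion fun p hp => (hU p (Finset.mem_filter.1 hp).1).2.1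
  · simp only [ptype_iUnion]
    refine iUnion₂_subset fun p hp => ?_
    obtain ⟨hpL, hqp⟩ := Finset.mem_filter.1 hp
    exact (hU p hpL).2.2 ▸ Ici_subset_Ici.2 hqp
  · refine subset_antisymm (iUnion₂_subset fun q _ => iUnion₂_subset fun p hp =>
      hUA' p (Finset.mem_filter.1 hp).1) ?_
    rw [← hUA]
    refine iUnion₂_subset fun p hp => ?_
    obtain ⟨q, hqp, hq⟩ := L.finite_toSet.isPWO.exists_le_minimal (Finset.mem_coe.2 hp)
    exact subset_biUnion_of_mem (u := fun q => ⋃ p ∈ L.filter (q ≤ ·), U p) (show q ∈ _ from hq)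
      |>.trans' (subset_biUnion_of_mem (u := U) (Finset.mem_filter.2 ⟨hp, hqp⟩))
  · intro q hq
    have hq_self : q ∈ ptype X (U q) := (hU q hq.prop).2.2 ▸ self_mem_Ici
    exact ptype_mono X (hUA' q hq.prop) hq_self

end SemiTrim

theorem finite_trim_partition_of_compactOpen_general
    [T2Space W]
    (X : P → Set W) (h : IsSemiTrim X)
    (A : Set W) (hAc : IsCompact A) (hAo : IsOpen A) :
    {p ∈ ptype X A | ∀ q ∈ ptype X A, ¬ q < p}.Finite ∧
    ∃ B : P → Set W,
      (∀ p ∈ {p ∈ ptype X A | ∀ q ∈ ptype X A, ¬ q < p}, IsTrimSet X p (B p)) ∧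
      (∀ p ∈ {p ∈ ptype X A | ∀ q ∈ ptype X A, ¬ q < p},
        ∀ q ∈ {p ∈ ptype X A | ∀ q ∈ ptype X A, ¬ q < p}, p ≠ q → Disjoint (B p) (B q)) ∧
      (⋃ p ∈ {p ∈ ptype X A | ∀ q ∈ ptype X A, ¬ q < p}, B p) = A := by
  obtain ⟨L, U, hU, hUA⟩ := h.exists_trim_cover hAc hAo
  have hF : {p ∈ ptype X A | ∀ q ∈ ptype X A, ¬ q < p} = {p | Minimal (· ∈ (L : Set P)) p} := by
    ext p
    change _ ↔ Minimal _ p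
    rw [← minimal_mem_upperClosure_iff, ← ptype_eq_upperClosure_of_trim_cover hU hUA,
      minimal_iff_forall_lt]
    exact and_congr_right fun _ => ⟨fun H q hq hqA => H q hqA hq, fun H q hqA hq => H hq hqA⟩
  rw [hF]
  exact ⟨L.finite_toSet.subset (setOfPred_minimal_subset _),
    h.exists_trim_partition_of_trim_cover hU hUA⟩

/-- In a Stone space `W` with a semi-trim `P`-partition, for every nonempty
compact open `A` the set `F` of minimal elements of `T(A)` is finite, and `A` has a finite
partition into compact open sets, one `p`-trim piece for each `p ∈ F`. -/
theorem finite_trim_partition_of_compactOpen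
    [LocallyCompactSpace W] [TotallyDisconnectedSpace W] [T2Space W]
    (X : P → Set W) (h : IsSemiTrim X)
    (A : Set W) (hAc : IsCompact A) (hAo : IsOpen A) (hne : A.Nonempty) :
    {p ∈ ptype X A | ∀ q ∈ ptype X A, ¬ q < p}.Finite ∧
    ∃ B : P → Set W,
      (∀ p ∈ {p ∈ ptype X A | ∀ q ∈ ptype X A, ¬ q < p}, IsTrimSet X p (B p)) ∧
      (∀ p ∈ {p ∈ ptype X A | ∀ q ∈ ptype X A, ¬ q < p},
        ∀ q ∈ {p ∈ ptype X A | ∀ q ∈ ptype X A, ¬ q < p}, p ≠ q → Disjoint (B p) (B q)) ∧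
      (⋃ p ∈ {p ∈ ptype X A | ∀ q ∈ ptype X A, ¬ q < p}, B p) = A :=
  finite_trim_partition_of_compactOpen_general X h A hAc hAo
end

section
/- Let P be a poset. If some Stone space W admits a complete trim P-partition, then P satisfies the ascending chain condition. -/
/-! If `f` were strictly increasing, refining trim neighbourhoods would give a decreasing
sequence of compact open `f n`-trim sets `A n`. A point of `⋂ n, A n` lies in some `X r` with
`r` an upper bound of `f`, hence in an `r`-trim set; by compactness some `A N` is covered by
such sets. But `A N` meets `X (f N)`, and a point of `X (f N)` in an `r`-trim set forces
`r ≤ f N < f (N + 1) ≤ r`. -/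

open Set

variable {P W : Type*} [PartialOrder P] [TopologicalSpace W]

section TrimSets

variable {X : P → Set W} {p q : P} {A : Set W} {x : W}

theorem IsTrimSet.mem_ptype_iff (hA : IsTrimSet X p A) : q ∈ ptype X A ↔ p ≤ q := by
  rw [hA.2.2]; rfl

theorem IsTrimSet.le_of_mem (hA : IsTrimSet X p A) (hxA : x ∈ A) (hxq : x ∈ X q) : p ≤ q :=
  hA.mem_ptype_iff.1 ⟨x, hxA, hxq⟩

theorem IsTrimSet.inter_nonempty (hA : IsTrimSet X p A) : (A ∩ X p).Nonempty :=
  hA.mem_ptype_iff.2 le_rfl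

theorem exists_isTrimSet_mem_subset
    (hbase : ∀ w : W, ∀ U ∈ nhds w, ∃ p A, IsTrimSet X p A ∧ w ∈ A ∧ A ⊆ U)
    (hpoint : ∀ p, ∀ x ∈ X p, ∃ A, IsTrimSet X p A ∧ x ∈ A)
    {U : Set W} (hU : IsOpen U) (hxU : x ∈ U) (hxq : x ∈ X q) :
    ∃ B, IsTrimSet X q B ∧ x ∈ B ∧ B ⊆ U := by
  obtain ⟨D, hD, hxD⟩ := hpoint q x hxq
  obtain ⟨r, C, hC, hxC, hCUD⟩ :=
    hbase x (U ∩ D) ((hU.inter hD.2.1).mem_nhds ⟨hxU, hxD⟩)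
  have hrq : r ≤ q := hC.le_of_mem hxC hxq
  obtain ⟨z, hzC, hzr⟩ := hC.inter_nonempty
  have hqr : q ≤ r := hD.le_of_mem (hCUD hzC).2 hzr
  exact ⟨C, le_antisymm hrq hqr ▸ hC, hxC, hCUD.trans inter_subset_left⟩

theorem exists_antitone_isTrimSet
    (hbase : ∀ w : W, ∀ U ∈ nhds w, ∃ p A, IsTrimSet X p A ∧ w ∈ A ∧ A ⊆ U)
    (hpoint : ∀ p, ∀ x ∈ X p, ∃ A, IsTrimSet X p A ∧ x ∈ A)
    (hne : ∀ p, (X p).Nonempty) {f : ℕ → P} (hf : Monotone f) :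
    ∃ A : ℕ → Set W, Antitone A ∧ ∀ n, IsTrimSet X (f n) (A n) := by
  have step : ∀ n (A : {A // IsTrimSet X (f n) A}), ∃ B : {B // IsTrimSet X (f (n + 1)) B},
      B.1 ⊆ A.1 := by
    rintro n ⟨A, hA⟩
    obtain ⟨x, hxA, hxX⟩ := hA.mem_ptype_iff.2 (hf n.le_succ)
    obtain ⟨B, hB, -, hBA⟩ := exists_isTrimSet_mem_subset hbase hpoint hA.2.1 hxA hxX
    exact ⟨⟨B, hB⟩, hBA⟩
  choose next hnext using step
  obtain ⟨x₀, hx₀⟩ := hne (f 0)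
  obtain ⟨A₀, hA₀, -⟩ := hpoint (f 0) x₀ hx₀
  let A : (n : ℕ) → {A // IsTrimSet X (f n) A} := fun n => Nat.rec ⟨A₀, hA₀⟩ next n
  exact ⟨fun n => (A n).1, antitone_nat_of_succ_le fun n => hnext n (A n), fun n => (A n).2⟩

theorem not_exists_antitone_isTrimSet [T2Space W] (hcover : (⋃ p, X p) = univ)
    (hpoint : ∀ p, ∀ x ∈ X p, ∃ A, IsTrimSet X p A ∧ x ∈ A)
    {f : ℕ → P} (hf : StrictMono f) :
    ¬ ∃ A : ℕ → Set W, Antitone A ∧ ∀ n, IsTrimSet X (f n) (A n) := by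
  rintro ⟨A, hA, hAf⟩
  set U := {y | ∃ r ∈ upperBounds (range f), ∃ C, IsTrimSet X r C ∧ y ∈ C}
  have hU : ∀ x ∈ ⋂ n, A n, U ∈ nhds x := by
    intro x hx
    obtain ⟨r, hxr⟩ := mem_iUnion.1 (hcover ▸ mem_univ x)
    obtain ⟨C, hC, hxC⟩ := hpoint r x hxr
    have hr : r ∈ upperBounds (range f) :=
      forall_mem_range.2 fun n => (hAf n).le_of_mem (mem_iInter.1 hx n) hxr
    exact Filter.mem_of_superset (hC.2.1.mem_nhds hxC) fun y hy => ⟨r, hr, C, hC, hy⟩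
  obtain ⟨N, hN⟩ := exists_subset_nhds_of_isCompact hA.directed_ge (fun n => (hAf n).1) hU
  obtain ⟨y, hyA, hyX⟩ := (hAf N).inter_nonempty
  obtain ⟨r, hr, C, hC, hyC⟩ := hN hyA
  exact (hf N.lt_succ_self).not_ge ((hr (mem_range_self _)).trans (hC.le_of_mem hyC hyX))

end TrimSets

/-- If some Stone space admits a complete trim `P`-partition, then `P`
satisfies the ascending chain condition. -/
theorem acc_of_completeTrim
    (h : ∃ (W : Type) (_ : TopologicalSpace W),
      LocallyCompactSpace W ∧ TotallyDisconnectedSpace W ∧ T2Space W ∧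
      ∃ X : P → Set W, IsPPartition X ∧ (⋃ p, X p) = univ ∧
        (∀ w : W, ∀ U ∈ nhds w, ∃ p A, IsTrimSet X p A ∧ w ∈ A ∧ A ⊆ U) ∧
        (∀ p, ∀ x ∈ X p, ∃ A, IsTrimSet X p A ∧ x ∈ A) ∧
        (∀ p : P, ∀ w : W,
          (∀ U ∈ nhds w, ∃ A, IsTrimSet X p A ∧ w ∈ A ∧ A ⊆ U) → w ∈ X p)) :
    ∀ f : ℕ → P, ¬ StrictMono f := by
  intro f hf
  obtain ⟨W, _, -, -, _, X, hX, hcover, hbase, hpoint, -⟩ := h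
  exact not_exists_antitone_isTrimSet hcover hpoint hf
    (exists_antitone_isTrimSet hbase hpoint hX.nonempty hf.monotone)
end

section
/- Let P be a countable poset. If some second countable Stone space W admits a good P-partition, then P is ω-complete: every ascending sequence p_1 ≤ p_2 ≤ p_3 ≤ ⋯ in P has a least upper bound in P. -/
/-!
Let `T` be the closure of `⋃ n, X (f n)`. As a closed subset of a locally compact Hausdorff
space, `T` is a Baire space, and it is covered by the countably many sets `T ∩ X p`. So for
some `p` an open set `O` of `W` meets `T` inside the closure of `T ∩ X p`. Because the partition
is good, `O` then meets every `X (f k)` with `k` large, and those points of `T ∩ O` carry the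
label `f k` while lying in `closure (X p) = ⋃ q ≤ p, X q`: hence `f k ≤ p`. Conversely `T` lies
in `closure (X r)` for every upper bound `r` of the chain, and `T` contains a point of `X p`,
so `p ≤ r`.
-/

open Set

variable {P W : Type*} [PartialOrder P] [TopologicalSpace W]

open Function

theorem IsClosed.exists_isOpen_inter_subset_closure_inter {ι : Type*} [R1Space W]
    [LocallyCompactSpace W] [Countable ι] {T : Set W} (hT : IsClosed T)
    (hne : T.Nonempty) {S : ι → Set W} (hcover : T ⊆ ⋃ i, S i) :
    ∃ i O, IsOpen O ∧ (T ∩ O).Nonempty ∧ T ∩ O ⊆ closure (T ∩ S i) := by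
  have := hT.locallyCompactSpace
  have := hne.to_subtype
  obtain ⟨i, hi⟩ := nonempty_interior_of_iUnion_of_closed
    (f := fun i => closure ((↑) ⁻¹' S i : Set T)) (fun _ => isClosed_closure) <|
    eq_univ_of_forall fun t => by
      obtain ⟨i, hi⟩ := mem_iUnion.mp (hcover t.2)
      exact mem_iUnion.mpr ⟨i, subset_closure hi⟩
  obtain ⟨O, hO, hOT⟩ :=
    isOpen_induced_iff.mp (isOpen_interior (s := closure ((↑) ⁻¹' S i : Set T)))
  have hTO : T ∩ O = (↑) '' interior (closure ((↑) ⁻¹' S i : Set T)) := by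
    rw [← hOT, Subtype.image_preimage_coe]
  refine ⟨i, O, hO, hTO ▸ hi.image _, hTO ▸ ?_⟩
  calc (↑) '' interior (closure ((↑) ⁻¹' S i : Set T))
      ⊆ (↑) '' closure ((↑) ⁻¹' S i : Set T) := image_mono interior_subset
    _ ⊆ closure ((↑) '' ((↑) ⁻¹' S i : Set T)) :=
        image_closure_subset_closure_image continuous_subtype_val
    _ = closure (T ∩ S i) := by rw [Subtype.image_preimage_coe]

section GoodPartition

variable {X : P → Set W}

theorem subset_closure_of_le (hgood : ∀ p, closure (X p) = ⋃ q ≤ p, X q) {p q : P}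
    (hpq : p ≤ q) : X p ⊆ closure (X q) := by
  rw [hgood]
  exact subset_biUnion_of_mem (u := X) hpq

theorem le_of_mem_of_mem_closure (hdisj : Pairwise (Disjoint on X))
    (hgood : ∀ p, closure (X p) = ⋃ q ≤ p, X q) {p q : P} {y : W} (hq : y ∈ X q)
    (hp : y ∈ closure (X p)) : q ≤ p := by
  rw [hgood] at hp
  obtain ⟨r, hrp, hr⟩ := mem_iUnion₂.mp hp
  obtain rfl : q = r := by
    by_contra hne
    exact disjoint_left.mp (hdisj hne) hq hr
  exact hrp

theorem le_of_mem_closure_iUnion (hdisj : Pairwise (Disjoint on X))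
    (hgood : ∀ p, closure (X p) = ⋃ q ≤ p, X q) {ι : Type*} {f : ι → P} {p r : P}
    (hr : ∀ i, f i ≤ r) {y : W} (hp : y ∈ X p) (hy : y ∈ closure (⋃ i, X (f i))) : p ≤ r :=
  le_of_mem_of_mem_closure hdisj hgood hp <|
    closure_minimal (iUnion_subset fun i => subset_closure_of_le hgood (hr i)) isClosed_closure hy

theorem le_of_isOpen_inter_closure_iUnion_subset (hdisj : Pairwise (Disjoint on X))
    (hgood : ∀ p, closure (X p) = ⋃ q ≤ p, X q) {f : ℕ → P} (hf : Monotone f) {p : P}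
    {O : Set W} (hO : IsOpen O) (hmeet : (closure (⋃ n, X (f n)) ∩ O).Nonempty)
    (hsub : closure (⋃ n, X (f n)) ∩ O ⊆ closure (X p)) (m : ℕ) : f m ≤ p := by
  obtain ⟨x, hxU, hxO⟩ := (closure_inter_open_nonempty_iff hO).mp hmeet
  obtain ⟨n, hxn⟩ := mem_iUnion.mp hxU
  have hle : ∀ k, n ≤ k → f k ≤ p := fun k hk => by
    obtain ⟨y, hyk, hyO⟩ := (closure_inter_open_nonempty_iff hO).mp
      ⟨x, subset_closure_of_le hgood (hf hk) hxn, hxO⟩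
    exact le_of_mem_of_mem_closure hdisj hgood hyk
      (hsub ⟨subset_closure (mem_iUnion_of_mem k hyk), hyO⟩)
  exact (hf (le_max_left m n)).trans (hle _ (le_max_right m n))

end GoodPartition

/-- If `P` is a countable poset and some second countable Stone space admits
a good `P`-partition, then `P` is ω-complete: every ascending sequence has a least upper
bound. -/
theorem omegaComplete_of_good [Countable P]
    (h : ∃ (W : Type) (_ : TopologicalSpace W),
      LocallyCompactSpace W ∧ TotallyDisconnectedSpace W ∧ T2Space W ∧
      SecondCountableTopology W ∧
      ∃ X : P → Set W, IsPPartition X ∧ (⋃ p, X p) = univ ∧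
        ∀ p, closure (X p) = ⋃ q ≤ p, X q) :
    ∀ f : ℕ → P, Monotone f → ∃ q : P, IsLUB (range f) q := by
  obtain ⟨W, _, _, -, _, -, X, hX, hcover, hgood⟩ := h
  intro f hf
  set T := closure (⋃ n, X (f n))
  have hTne : T.Nonempty :=
    ((hX.nonempty (f 0)).mono (subset_iUnion (fun n => X (f n)) 0)).closure
  obtain ⟨p, O, hO, hTO, hTOp⟩ := isClosed_closure.exists_isOpen_inter_subset_closure_inter
    hTne (hcover.symm ▸ subset_univ T)
  refine ⟨p, ?_, fun r hr => ?_⟩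
  · rintro _ ⟨m, rfl⟩
    exact le_of_isOpen_inter_closure_iUnion_subset hX.pairwise_disjoint hgood hf hO hTO
      (hTOp.trans (closure_mono inter_subset_right)) m
  · obtain ⟨y, hyT, hyp⟩ := closure_nonempty_iff.mp (hTO.mono hTOp)
    exact le_of_mem_closure_iUnion hX.pairwise_disjoint hgood (fun n => hr (mem_range_self n))
      hyp hyT
end

section
/- Let P ⊆ Q be posets, W a Stone space, 𝒳 = {X_p | p ∈ P} a semi-trim P-partition of W and 𝒴 = {Y_q | q ∈ Q} a semi-trim Q-partition of W such that 𝒴 is a regular extension of 𝒳. Then a compact open set A ⊆ W is p-trim with respect to 𝒳 if and only if it is p-trim with respect to 𝒴 (in particular the trim sets of the two partitions coincide, with the same labels), and Q̂ = P̂. -/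
/-!
When trim sets form a neighbourhood base, the type of an open set is an upper set: a point of
`X p` has a trim neighbourhood whose label is at most `p`. So an `X`-trim set `A` with label `p`
has a `Y`-type containing `p` (as `X p ⊆ Y p`) and upward closed, while regularity bounds it by
`Ici p`; thus `A` is `p`-trim for `Y`. Conversely, a `q`-trim set of `Y` contains an `X`-trim
neighbourhood `B` of a point of `Y q`; its label `r` satisfies `r ≤ q` by regularity and `q ≤ r`
because `B` is also `r`-trim for `Y`, and then `A` is `r`-trim for `X`.
-/

open Set

variable {P W : Type*} [PartialOrder P] [TopologicalSpace W]

def HasTrimNhdsBasis (X : P → Set W) : Prop :=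
  ∀ w : W, ∀ U ∈ nhds w, ∃ p A, IsTrimSet X p A ∧ w ∈ A ∧ A ⊆ U

theorem ptype_mono_s12 {P W : Type*} {X : P → Set W} {A B : Set W} (h : A ⊆ B) :
    ptype X A ⊆ ptype X B :=
  fun _ ⟨x, hxA, hx⟩ => ⟨x, h hxA, hx⟩

namespace IsTrimSet

variable {X : P → Set W} {p q : P} {A B : Set W}

theorem mem_ptype (hA : IsTrimSet X p A) : p ∈ ptype X A := by
  rw [hA.2.2]
  exact self_mem_Ici

theorem le_of_subset (hA : IsTrimSet X p A) (hB : IsTrimSet X q B) (hBA : B ⊆ A) : p ≤ q := by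
  have hq := ptype_mono_s12 hBA hB.mem_ptype
  rwa [hA.2.2] at hq

end IsTrimSet

theorem HasTrimNhdsBasis.isUpperSet_ptype {X : P → Set W} (hX : HasTrimNhdsBasis X)
    {A : Set W} (hA : IsOpen A) : IsUpperSet (ptype X A) := by
  rintro p q hpq ⟨x, hxA, hxp⟩
  obtain ⟨r, B, hB, hxB, hBA⟩ := hX x A (hA.mem_nhds hxA)
  have hrp : r ≤ p := by
    have hp : p ∈ ptype X B := ⟨x, hxB, hxp⟩
    rwa [hB.2.2] at hp
  apply ptype_mono_s12 hBA
  rw [hB.2.2]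
  exact hrp.trans hpq

structure IsRegularExtension {Q : Type*} [PartialOrder Q] {Pset : Set Q}
    (X : Pset → Set W) (Y : Q → Set W) : Prop where
  subset : ∀ p : Pset, X p ⊆ Y p
  label_le : ∀ (A : Set W) (p : Pset) (q : Q), IsTrimSet X p A → (A ∩ Y q).Nonempty → ↑p ≤ q

namespace IsRegularExtension

variable {Q : Type*} [PartialOrder Q] {Pset : Set Q} {X : Pset → Set W} {Y : Q → Set W}

theorem coe_mem_ptype (hR : IsRegularExtension X Y) {A : Set W} {p : Pset}
    (hp : p ∈ ptype X A) : (p : Q) ∈ ptype Y A :=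
  let ⟨x, hxA, hx⟩ := hp
  ⟨x, hxA, hR.subset p hx⟩

theorem isTrimSet (hR : IsRegularExtension X Y) (hY : HasTrimNhdsBasis Y) {A : Set W} {p : Pset}
    (hA : IsTrimSet X p A) : IsTrimSet Y p A := by
  refine ⟨hA.1, hA.2.1, Subset.antisymm (fun q hq => hR.label_le A p q hA hq) ?_⟩
  exact fun q hq => hY.isUpperSet_ptype hA.2.1 hq (hR.coe_mem_ptype hA.mem_ptype)

theorem exists_isTrimSet (hR : IsRegularExtension X Y) (hX : HasTrimNhdsBasis X)
    (hY : HasTrimNhdsBasis Y) {A : Set W} {q : Q} (hA : IsTrimSet Y q A) :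
    ∃ p : Pset, (p : Q) = q ∧ IsTrimSet X p A := by
  obtain ⟨x, hxA, hxq⟩ := hA.mem_ptype
  obtain ⟨r, B, hB, hxB, hBA⟩ := hX x A (hA.2.1.mem_nhds hxA)
  have hrq : (r : Q) = q :=
    le_antisymm (hR.label_le B r q hB ⟨x, hxB, hxq⟩) (hA.le_of_subset (hR.isTrimSet hY hB) hBA)
  refine ⟨r, hrq, hA.1, hA.2.1, Subset.antisymm (fun s hs => ?_) ?_⟩
  · have hs' := hR.coe_mem_ptype hs
    rwa [hA.2.2, ← hrq] at hs'
  · rw [← hB.2.2]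
    exact ptype_mono_s12 hBA

theorem isTrimSet_iff (hR : IsRegularExtension X Y) (hX : HasTrimNhdsBasis X)
    (hY : HasTrimNhdsBasis Y) {A : Set W} {p : Pset} : IsTrimSet X p A ↔ IsTrimSet Y p A := by
  refine ⟨hR.isTrimSet hY, fun h => ?_⟩
  obtain ⟨r, hr, hA⟩ := hR.exists_isTrimSet hX hY h
  rwa [Subtype.coe_injective hr] at hA

theorem trimHat_eq (hR : IsRegularExtension X Y) (hX : HasTrimNhdsBasis X)
    (hY : HasTrimNhdsBasis Y) : trimHat Y = Subtype.val '' trimHat X := by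
  ext q
  constructor
  · rintro ⟨A, hA⟩
    obtain ⟨p, hp, hA'⟩ := hR.exists_isTrimSet hX hY hA
    exact ⟨p, ⟨A, hA'⟩, hp⟩
  · rintro ⟨p, ⟨A, hA⟩, rfl⟩
    exact ⟨A, hR.isTrimSet hY hA⟩

end IsRegularExtension

theorem regularExtension_same_trim_general
    {Q : Type*} [PartialOrder Q]
    (Pset : Set Q) (X : Pset → Set W) (Y : Q → Set W)
    (hX : IsSemiTrim X) (hY : IsSemiTrim Y)
    (hreg1 : ∀ p : Pset, X p ⊆ Y ↑p)
    (hreg2 : ∀ (A : Set W) (p : Pset) (q : Q),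
      IsTrimSet X p A → (A ∩ Y q).Nonempty → ↑p ≤ q) :
    (∀ (A : Set W) (p : Pset), IsTrimSet X p A ↔ IsTrimSet Y ↑p A) ∧
    (∀ (A : Set W) (q : Q), IsTrimSet Y q A →
      ∃ p : Pset, (p : Q) = q ∧ IsTrimSet X p A) ∧
    trimHat Y = Subtype.val '' trimHat X := by
  have hR : IsRegularExtension X Y := ⟨hreg1, hreg2⟩
  exact ⟨fun _ _ => hR.isTrimSet_iff hX.nhds_base hY.nhds_base,
    fun _ _ => hR.exists_isTrimSet hX.nhds_base hY.nhds_base,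
    hR.trimHat_eq hX.nhds_base hY.nhds_base⟩

/-- Let `P ⊆ Q` be posets (modelled as a subset `Pset` of the poset `Q` with
the induced order), `W` a Stone space, `𝒳` a semi-trim `Pset`-partition and `𝒴` a semi-trim
`Q`-partition of `W` with `𝒴` a regular extension of `𝒳`. Then a compact open set is `p`-trim
w.r.t. `𝒳` iff it is `p`-trim w.r.t. `𝒴`; every trim set of `𝒴` is trim for `𝒳` with the same
label; and `Q̂ = P̂`. -/
theorem regularExtension_same_trim
    {Q : Type*} [PartialOrder Q]
    [LocallyCompactSpace W] [TotallyDisconnectedSpace W] [T2Space W]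
    (Pset : Set Q) (X : Pset → Set W) (Y : Q → Set W)
    (hX : IsSemiTrim X) (hY : IsSemiTrim Y)
    (hreg1 : ∀ p : Pset, X p ⊆ Y ↑p)
    (hreg2 : ∀ (A : Set W) (p : Pset) (q : Q),
      IsTrimSet X p A → (A ∩ Y q).Nonempty → ↑p ≤ q) :
    (∀ (A : Set W) (p : Pset), IsTrimSet X p A ↔ IsTrimSet Y ↑p A) ∧
    (∀ (A : Set W) (q : Q), IsTrimSet Y q A →
      ∃ p : Pset, (p : Q) = q ∧ IsTrimSet X p A) ∧
    trimHat Y = Subtype.val '' trimHat X :=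
  regularExtension_same_trim_general Pset X Y hX hY hreg1 hreg2
end

section
/- Let P be a poset and 𝒳 = {X_p | p ∈ P} a semi-trim P-partition of a Stone space W. Define the clean interior 𝒳° = {Z_q | q ∈ P̂}, where Z_q is the set of clean points of X_q. Then 𝒳° is a trim P̂-partition of W, 𝒳 is a regular extension of 𝒳°, and 𝒳 and 𝒳° give rise to the same trim sets with the same labels. -/
open Set

variable {P W : Type*} [PartialOrder P] [TopologicalSpace W]

/-! The whole argument rests on `𝒳` and `𝒳°` having the same trim sets with the same labels.
An `𝒳`-trim set `A` meets the clean part of each `X p` with `p ∈ T(A) ∩ P̂`, because by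
trim-density it contains a `p`-trim set, all of whose points of `X p` are clean. Conversely a
point of `X p` in an `𝒳°`-trim set lies in a small `𝒳`-trim set whose label is at most `p`
(label supremum), and comparing types gives the same `𝒳`-type. -/

section CleanInterior

variable {X : P → Set W} {A : Set W} {p q : P}

theorem IsTrimSet.inter_nonempty_iff (hA : IsTrimSet X p A) :
    (A ∩ X q).Nonempty ↔ p ≤ q := by
  change q ∈ ptype X A ↔ _
  rw [hA.2.2]
  rfl

variable (X) in
def cleanInterior (q : trimHat X) : Set W :=
  {x ∈ X ↑q | ∃ A, IsTrimSet X ↑q A ∧ x ∈ A}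

theorem cleanInterior_subset (q : trimHat X) : cleanInterior X q ⊆ X ↑q :=
  fun _ hx => hx.1

namespace IsSemiTrim

variable (h : IsSemiTrim X)
include h

theorem inter_cleanInterior_nonempty (hA : IsOpen A) (q : trimHat X)
    (hAq : (A ∩ X ↑q).Nonempty) : (A ∩ cleanInterior X q).Nonempty := by
  obtain ⟨B, hBA, hB⟩ := h.trim_dense A hA q ⟨hAq, q.2⟩
  obtain ⟨x, hxB, hxq⟩ := hB.inter_nonempty_iff.mpr le_rfl
  exact ⟨x, hBA hxB, hxq, B, hB, hxB⟩

theorem exists_isTrimSet_le (hA : IsOpen A) {x : W} (hxA : x ∈ A) (hxp : x ∈ X p) :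
    ∃ r C, IsTrimSet X r C ∧ x ∈ C ∧ C ⊆ A ∧ r ≤ p := by
  obtain ⟨r, C, hC, hxC, hCA⟩ := h.nhds_base x A (hA.mem_nhds hxA)
  exact ⟨r, C, hC, hxC, hCA, (h.label_sup p x hxp).1 ⟨C, hC, hxC⟩⟩

theorem isTrimSet_cleanInterior_of_isTrimSet {q : trimHat X} (hA : IsTrimSet X ↑q A) :
    IsTrimSet (cleanInterior X) q A := by
  refine ⟨hA.1, hA.2.1, Set.ext fun p => ?_⟩
  change (A ∩ cleanInterior X p).Nonempty ↔ q ≤ p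
  refine ⟨fun hAp => ?_, fun hqp => ?_⟩
  · exact hA.inter_nonempty_iff.mp (hAp.mono (inter_subset_inter_right A (cleanInterior_subset p)))
  · exact h.inter_cleanInterior_nonempty hA.2.1 p (hA.inter_nonempty_iff.mpr hqp)

theorem isTrimSet_of_isTrimSet_cleanInterior {q : trimHat X}
    (hA : IsTrimSet (cleanInterior X) q A) : IsTrimSet X ↑q A := by
  refine ⟨hA.1, hA.2.1, Set.ext fun p => ?_⟩
  change (A ∩ X p).Nonempty ↔ ↑q ≤ p
  refine ⟨fun ⟨x, hxA, hxp⟩ => ?_, fun hqp => ?_⟩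
  · obtain ⟨r, C, hC, hxC, hCA, hrp⟩ := h.exists_isTrimSet_le hA.2.1 hxA hxp
    have hCr := h.isTrimSet_cleanInterior_of_isTrimSet (q := ⟨r, C, hC⟩) hC
    have hAr : (A ∩ cleanInterior X ⟨r, C, hC⟩).Nonempty :=
      (hCr.inter_nonempty_iff.mpr le_rfl).mono (inter_subset_inter_left _ hCA)
    exact (Subtype.coe_le_coe.mpr (hA.inter_nonempty_iff.mp hAr)).trans hrp
  · obtain ⟨x, hxA, hxq⟩ := hA.inter_nonempty_iff.mpr le_rfl
    obtain ⟨r, C, hC, -, hCA, hrq⟩ :=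
      h.exists_isTrimSet_le hA.2.1 hxA (cleanInterior_subset q hxq)
    exact (hC.inter_nonempty_iff.mpr (hrq.trans hqp)).mono (inter_subset_inter_left _ hCA)

theorem isTrimSet_cleanInterior_iff {q : trimHat X} :
    IsTrimSet (cleanInterior X) q A ↔ IsTrimSet X ↑q A :=
  ⟨h.isTrimSet_of_isTrimSet_cleanInterior, h.isTrimSet_cleanInterior_of_isTrimSet⟩

theorem exists_isTrimSet_cleanInterior_mem {q : trimHat X} {x : W}
    (hx : x ∈ cleanInterior X q) : ∃ A, IsTrimSet (cleanInterior X) q A ∧ x ∈ A := by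
  obtain ⟨-, A, hA, hxA⟩ := hx
  exact ⟨A, h.isTrimSet_cleanInterior_iff.mpr hA, hxA⟩

theorem isPPartition_cleanInterior : IsPPartition (cleanInterior X) where
  nonempty q := by
    obtain ⟨A, hA⟩ := q.2
    exact (h.inter_cleanInterior_nonempty hA.2.1 q (hA.inter_nonempty_iff.mpr le_rfl)).mono
      inter_subset_right
  pairwise_disjoint p q hpq :=
    (h.pairwise_disjoint (Subtype.coe_injective.ne hpq)).mono
      (cleanInterior_subset p) (cleanInterior_subset q)

theorem isSemiTrim_cleanInterior : IsSemiTrim (cleanInterior X) where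
  toIsPPartition := h.isPPartition_cleanInterior
  nhds_base w U hU := by
    obtain ⟨p, A, hA, hwA, hAU⟩ := h.nhds_base w U hU
    exact ⟨⟨p, A, hA⟩, A, h.isTrimSet_cleanInterior_of_isTrimSet hA, hwA, hAU⟩
  trim_dense A hA q := by
    rintro ⟨hAq, -⟩
    obtain ⟨B, hBA, hB⟩ := h.trim_dense A hA q
      ⟨hAq.mono (inter_subset_inter_right A (cleanInterior_subset q)), q.2⟩
    exact ⟨B, hBA, h.isTrimSet_cleanInterior_of_isTrimSet hB⟩
  label_sup q x hx := by
    refine IsGreatest.isLUB ⟨h.exists_isTrimSet_cleanInterior_mem hx, ?_⟩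
    rintro r ⟨C, hC, hxC⟩
    exact (h.label_sup q x (cleanInterior_subset q hx)).1
      ⟨C, h.isTrimSet_cleanInterior_iff.mp hC, hxC⟩
  full q w hw := by
    have hwq : w ∈ X ↑q := h.full q w fun U hU => by
      obtain ⟨A, hA, hwA, hAU⟩ := hw U hU
      exact ⟨A, h.isTrimSet_cleanInterior_iff.mp hA, hwA, hAU⟩
    obtain ⟨A, hA, hwA, -⟩ := hw univ Filter.univ_mem
    exact ⟨hwq, A, h.isTrimSet_cleanInterior_iff.mp hA, hwA⟩

end IsSemiTrim

end CleanInterior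

theorem cleanInterior_trim_general
    (X : P → Set W) (h : IsSemiTrim X)
    (Z : trimHat X → Set W)
    (hZ : ∀ q : trimHat X, Z q = {x ∈ X ↑q | ∃ A, IsTrimSet X ↑q A ∧ x ∈ A}) :
    IsSemiTrim Z ∧
    (∀ q : trimHat X, ∀ x ∈ Z q, ∃ A, IsTrimSet Z q A ∧ x ∈ A) ∧
    (∀ q : trimHat X, Z q ⊆ X ↑q) ∧
    (∀ (A : Set W) (q : trimHat X) (p : P),
      IsTrimSet Z q A → (A ∩ X p).Nonempty → ↑q ≤ p) ∧
    (∀ (A : Set W) (q : trimHat X), IsTrimSet Z q A ↔ IsTrimSet X ↑q A) := by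
  obtain rfl : Z = cleanInterior X := funext hZ
  refine ⟨h.isSemiTrim_cleanInterior, fun q x => h.exists_isTrimSet_cleanInterior_mem,
    cleanInterior_subset, fun A q p hA => ?_, fun A q => h.isTrimSet_cleanInterior_iff⟩
  exact (h.isTrimSet_of_isTrimSet_cleanInterior hA).inter_nonempty_iff.mp

/-- Let `𝒳` be a semi-trim `P`-partition of a Stone space `W`, and let
`𝒳° = {Z q | q ∈ P̂}` be its clean interior, where `Z q` is the set of clean points of `X q`.
Then `𝒳°` is a trim `P̂`-partition of `W` (a semi-trim partition all of whose points are
clean), `𝒳` is a regular extension of `𝒳°`, and `𝒳` and `𝒳°` give rise to the same trim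
sets with the same labels. -/
theorem cleanInterior_trim
    [LocallyCompactSpace W] [TotallyDisconnectedSpace W] [T2Space W]
    (X : P → Set W) (h : IsSemiTrim X)
    (Z : trimHat X → Set W)
    (hZ : ∀ q : trimHat X, Z q = {x ∈ X ↑q | ∃ A, IsTrimSet X ↑q A ∧ x ∈ A}) :
    IsSemiTrim Z ∧
    (∀ q : trimHat X, ∀ x ∈ Z q, ∃ A, IsTrimSet Z q A ∧ x ∈ A) ∧
    (∀ q : trimHat X, Z q ⊆ X ↑q) ∧
    (∀ (A : Set W) (q : trimHat X) (p : P),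
      IsTrimSet Z q A → (A ∩ X p).Nonempty → ↑q ≤ p) ∧
    (∀ (A : Set W) (q : trimHat X), IsTrimSet Z q A ↔ IsTrimSet X ↑q A) :=
  cleanInterior_trim_general X h Z hZ
end

section
/- Let P be a countable poset. Then there exists a compact Stone space admitting a trim P-partition if and only if P has a finite foundation. -/
/-!
Compactness gives the forward direction: finitely many trim sets cover the space, every part is
nonempty, so the labels of these sets form a finite foundation.

Conversely, let `r i` run through a finite foundation and, for each `i`, take the tree of all words
over `ℕ × ℕ` with root labelled `r i`, where a letter `(e q, j)` raises a node label `p ≤ q` to `q`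
(an injection `e : P → ℕ` keeps the space in `Type`). The points are the finite and infinite
branches, a closed subspace of the Cantor cube of node indicators, and a branch lies in the part of
its eventual label. The branches through a node `v` avoiding finitely many children of `v` form a
basic clopen set that is trim for the label of `v`, since every larger label is the label of a
finite branch through a child that is not excluded. For fullness, a point all of whose neighbourhoods
contain a `p`-trim set has node labels `≤ p`, and a finite branch nearby shows that `p` is attained.
-/

open Set

variable {P W : Type*} [PartialOrder P] [TopologicalSpace W]

open Filter Topology

theorem exists_finset_forall_le_of_compactSpace [CompactSpace W] {X : P → Set W}
    (hX : ∀ p, (X p).Nonempty) (htrim : ∀ w : W, ∃ p A, IsTrimSet X p A ∧ w ∈ A) :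
    ∃ F : Finset P, ∀ r : P, ∃ p ∈ F, p ≤ r := by
  classical
  choose p A hA hwA using htrim
  obtain ⟨t, ht⟩ := CompactSpace.elim_nhds_subcover A fun w => (hA w).2.1.mem_nhds (hwA w)
  refine ⟨t.image p, fun q => ?_⟩
  obtain ⟨x, hx⟩ := hX q
  obtain ⟨w, hwt, hxw⟩ : ∃ w ∈ t, x ∈ A w := by simpa using ht.ge (mem_univ x)
  have hq : q ∈ ptype X (A w) := ⟨x, hxw, hx⟩
  rw [(hA w).2.2] at hq
  exact ⟨p w, Finset.mem_image_of_mem p hwt, hq⟩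

theorem List.exists_cons_isSuffix {α : Type*} {l m : List α} (h : l <:+ m)
    (hlt : l.length < m.length) : ∃ a, a :: l <:+ m := by
  obtain ⟨t, rfl⟩ := h
  have ht : t ≠ [] := by rintro rfl; simp at hlt
  refine ⟨t.getLast ht, t.dropLast, ?_⟩
  simpa using congrArg (· ++ l) (List.dropLast_append_getLast ht)

theorem isClopen_setOf_apply_eq {ι : Type*} (i : ι) (b : Bool) :
    IsClopen {x : ι → Bool | x i = b} :=
  (isClopen_discrete {b}).preimage (continuous_apply i)

/-- A node of the tree of words over `α` is a list read backwards: its head is the last letter,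
and its tail is its parent. A branch is the indicator of the set of nodes on a finite or infinite
path from the root `[]`. -/
structure IsBranch {α : Type*} (x : List α → Bool) : Prop where
  nil : x [] = true
  of_cons {a : α} {l : List α} : x (a :: l) = true → x l = true
  eq_of_cons {a b : α} {l : List α} : x (a :: l) = true → x (b :: l) = true → a = b

abbrev Branch (α : Type*) : Type _ := {x : List α → Bool // IsBranch x}

namespace Branch

variable {α : Type*}

theorem isClosed_setOf_isBranch : IsClosed {x : List α → Bool | IsBranch x} := by
  have hopen (l : List α) := (isClopen_setOf_apply_eq l true).isOpen
  have hclosed (l : List α) := (isClopen_setOf_apply_eq l true).isClosed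
  have hset : {x : List α → Bool | IsBranch x} = {x | x [] = true} ∩
      (⋂ (a : α) (l : List α), {x | x (a :: l) = true → x l = true}) ∩
      ⋂ (a : α) (b : α) (l : List α), {x | x (a :: l) = true → x (b :: l) = true → a = b} := by
    ext x
    simp only [mem_ofPred_eq, mem_inter_iff, mem_iInter]
    exact ⟨fun h => ⟨⟨h.nil, fun _ _ => h.of_cons⟩, fun _ _ _ => h.eq_of_cons⟩,
      fun ⟨⟨h₁, h₂⟩, h₃⟩ => ⟨h₁, h₂ _ _, h₃ _ _ _⟩⟩
  rw [hset]
  refine ((hclosed []).inter (isClosed_iInter fun a => isClosed_iInter fun l => ?_)).inter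
    (isClosed_iInter fun a => isClosed_iInter fun b => isClosed_iInter fun l => ?_)
  · exact isClosed_imp (hopen _) (hclosed l)
  · exact isClosed_imp (hopen _) (isClosed_imp (hopen _) isClosed_const)

instance : CompactSpace (Branch α) :=
  isCompact_iff_compactSpace.mp isClosed_setOf_isBranch.isCompact

theorem isClopen_setOf_apply (l : List α) (b : Bool) : IsClopen {S : Branch α | S.1 l = b} :=
  (isClopen_setOf_apply_eq l b).preimage continuous_subtype_val

variable (S : Branch α)

theorem apply_of_isSuffix {l m : List α} (hm : S.1 m) (h : l <:+ m) : S.1 l := by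
  obtain ⟨t, rfl⟩ := h
  induction t with
  | nil => exact hm
  | cons a t ih => exact ih (S.2.of_cons hm)

theorem eq_of_length_eq : ∀ {l m : List α}, S.1 l → S.1 m → l.length = m.length → l = m
  | [], [], _, _, _ => rfl
  | a :: l, b :: m, hl, hm, h => by
    obtain rfl := eq_of_length_eq (S.2.of_cons hl) (S.2.of_cons hm) (by simpa using h)
    rw [S.2.eq_of_cons hl hm]

theorem isSuffix_of_length_le {l m : List α} (hl : S.1 l) (hm : S.1 m)
    (h : l.length ≤ m.length) : l <:+ m := by
  have hdrop : S.1 (m.drop (m.length - l.length)) := S.apply_of_isSuffix hm (List.drop_suffix _ _)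
  rw [S.eq_of_length_eq hl hdrop (by simp; omega)]
  exact List.drop_suffix _ _

theorem exists_maximal_length_le (N : ℕ) :
    ∃ l, S.1 l ∧ l.length ≤ N ∧ ∀ m, S.1 m → m.length ≤ N → m.length ≤ l.length := by
  classical
  obtain ⟨l, hl, hlen⟩ := Nat.findGreatest_spec (P := fun k => ∃ l, S.1 l ∧ l.length = k)
    (Nat.zero_le N) ⟨[], S.2.nil, rfl⟩
  exact ⟨l, hl, hlen ▸ Nat.findGreatest_le N,
    fun m hm hmN => hlen ▸ Nat.le_findGreatest hmN ⟨m, hm, rfl⟩⟩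

open Classical in
noncomputable def ofList (l : List α) : Branch α where
  val m := decide (m <:+ l)
  property := by
    refine ⟨by simp, fun h => ?_, fun ha hb => ?_⟩
    · simp only [decide_eq_true_eq] at h ⊢
      exact (List.suffix_cons _ _).trans h
    · simp only [decide_eq_true_eq] at ha hb
      have := (List.suffix_of_suffix_length_le ha hb (by simp)).eq_of_length (by simp)
      exact (List.cons.inj this).1

@[simp]
theorem ofList_apply (l m : List α) : (ofList l).1 m = true ↔ m <:+ l := by
  simp [ofList]

def cyl (l : List α) (K : Finset α) : Set (Branch α) :=
  {S | S.1 l ∧ ∀ a ∈ K, S.1 (a :: l) = false}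

theorem isClopen_cyl (l : List α) (K : Finset α) : IsClopen (cyl l K) := by
  have : cyl l K = {S : Branch α | S.1 l = true} ∩ ⋂ a ∈ K, {S | S.1 (a :: l) = false} := by
    ext S; simp [cyl]
  rw [this]
  exact (isClopen_setOf_apply l true).inter
    (isClopen_biInter_finset fun a _ => isClopen_setOf_apply _ false)

theorem ofList_mem_cyl (l : List α) (K : Finset α) : ofList l ∈ cyl l K :=
  ⟨by simp, fun a _ => Bool.eq_false_iff.2 fun h => by
    simpa using ((ofList_apply _ _).1 h).length_le⟩

theorem ofList_cons_mem_cyl {a : α} {K : Finset α} (ha : a ∉ K) (l : List α) :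
    ofList (a :: l) ∈ cyl l K := by
  refine ⟨by simp, fun b hb => ?_⟩
  have hba : b :: l ≠ a :: l := by rintro ⟨⟩; exact ha hb
  exact Bool.eq_false_iff.2 fun h => hba (((ofList_apply _ _).1 h).eq_of_length rfl)

/-- A basic neighbourhood of `S` tests finitely many nodes, of bounded length; it is determined by
the longest node `l` of `S` below that bound together with the finitely many letters that could
follow `l`. -/
theorem exists_mem_cyl_subset {U : Set (Branch α)} (hU : U ∈ 𝓝 S) :
    ∃ l K, S ∈ cyl l K ∧ cyl l K ⊆ U := by
  classical
  rw [nhds_induced] at hU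
  obtain ⟨u, hu, huU⟩ := mem_comap.1 hU
  rw [nhds_pi, mem_pi'] at hu
  obtain ⟨I, t, ht, hIt⟩ := hu
  obtain ⟨l, hl, -, hmax⟩ := S.exists_maximal_length_le (I.sup List.length)
  refine ⟨l, (I.biUnion List.toFinset).filter fun a => S.1 (a :: l) = false,
    ⟨hl, fun a ha => (Finset.mem_filter.1 ha).2⟩, fun S' hS' => huU (hIt fun m hm => ?_)⟩
  have hmN : m.length ≤ I.sup List.length := Finset.le_sup (f := List.length) hm
  suffices S'.1 m = S.1 m by rw [this]; exact mem_of_mem_nhds (ht m)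
  refine Bool.eq_iff_iff.2 ⟨fun h' => ?_, fun h => ?_⟩
  · rcases le_or_gt m.length l.length with hle | hlt
    · exact S.apply_of_isSuffix hl (S'.isSuffix_of_length_le h' hS'.1 hle)
    obtain ⟨a, ha⟩ := List.exists_cons_isSuffix (S'.isSuffix_of_length_le hS'.1 h' hlt.le) hlt
    have haS' : S'.1 (a :: l) := S'.apply_of_isSuffix h' ha
    by_cases haS : S.1 (a :: l)
    · have := hmax _ haS (ha.length_le.trans hmN)
      simp at this
    · have haK : a ∈ (I.biUnion List.toFinset).filter fun a => S.1 (a :: l) = false :=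
        Finset.mem_filter.2 ⟨Finset.mem_biUnion.2 ⟨m, hm, List.mem_toFinset.2
          (ha.subset List.mem_cons_self)⟩, by simpa using haS⟩
      simp [hS'.2 a haK] at haS'
  · exact S'.apply_of_isSuffix hS'.1 (S.isSuffix_of_length_le h hl (hmax m h hmN))

end Branch

section BranchPartition

open Branch

variable {α ι : Type*} (step : P → α → P)

def nodeLabel (p : P) (l : List α) : P :=
  l.foldr (fun a q => step q a) p

variable {step}

theorem nodeLabel_mono_of_isSuffix (hle : ∀ p a, p ≤ step p a) (p : P) {l m : List α}
    (h : l <:+ m) : nodeLabel step p l ≤ nodeLabel step p m := by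
  obtain ⟨t, rfl⟩ := h
  induction t with
  | nil => exact le_rfl
  | cons a t ih => exact ih.trans (hle _ _)

variable (step) in
/-- Node labels increase along a branch, so this says that they are eventually `p`; a branch whose
labels never stabilise lies in no part. -/
def branchPartition (r : ι → P) (p : P) : Set (ι × Branch α) :=
  {w | (∃ l, w.2.1 l ∧ nodeLabel step (r w.1) l = p) ∧ ∀ l, w.2.1 l → nodeLabel step (r w.1) l ≤ p}

variable {r : ι → P}

theorem mk_ofList_mem_branchPartition (hle : ∀ p a, p ≤ step p a) (i : ι) (l : List α) :
    (i, ofList l) ∈ branchPartition step r (nodeLabel step (r i) l) :=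
  ⟨⟨l, by simp, rfl⟩, fun _ hm => nodeLabel_mono_of_isSuffix hle _ ((ofList_apply _ _).1 hm)⟩

theorem isPPartition_branchPartition (hle : ∀ p a, p ≤ step p a)
    (hstep : ∀ {p q}, p ≤ q → ∀ K : Finset α, ∃ a ∉ K, step p a = q) (hr : ∀ q, ∃ i, r i ≤ q) :
    IsPPartition (branchPartition step r) where
  nonempty q := by
    obtain ⟨i, hi⟩ := hr q
    obtain ⟨a, -, ha⟩ := hstep hi ∅
    rw [← ha]
    exact ⟨_, mk_ofList_mem_branchPartition hle i [a]⟩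
  pairwise_disjoint p q hpq := Set.disjoint_left.2 <| by
    rintro w ⟨⟨l, hl, rfl⟩, hp⟩ ⟨⟨m, hm, rfl⟩, hq⟩
    exact hpq (le_antisymm (hq l hl) (hp m hm))

variable [TopologicalSpace ι]

theorem exists_mem_prod_cyl_subset {w : ι × Branch α} {U : Set (ι × Branch α)} (hU : U ∈ 𝓝 w) :
    ∃ l K, w.2 ∈ cyl l K ∧ {w.1} ×ˢ cyl l K ⊆ U := by
  obtain ⟨u, hu, v, hv, huv⟩ := mem_nhds_prod_iff.1 hU
  obtain ⟨l, K, hS, hKv⟩ := w.2.exists_mem_cyl_subset hv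
  exact ⟨l, K, hS, (prod_mono (singleton_subset_iff.2 (mem_of_mem_nhds hu)) hKv).trans huv⟩

variable [DiscreteTopology ι]

theorem isTrimSet_prod_cyl (hle : ∀ p a, p ≤ step p a)
    (hstep : ∀ {p q}, p ≤ q → ∀ K : Finset α, ∃ a ∉ K, step p a = q)
    (i : ι) (l : List α) (K : Finset α) :
    IsTrimSet (branchPartition step r) (nodeLabel step (r i) l) ({i} ×ˢ cyl l K) := by
  refine ⟨isCompact_singleton.prod (isClopen_cyl l K).isClosed.isCompact,
    (isOpen_discrete {i}).prod (isClopen_cyl l K).isOpen, Set.ext fun q => ⟨?_, fun hq => ?_⟩⟩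
  · rintro ⟨⟨j, S⟩, ⟨rfl, hS⟩, -, hX⟩
    exact hX l hS.1
  · obtain ⟨a, haK, ha⟩ := hstep hq K
    exact ⟨(i, ofList (a :: l)), ⟨rfl, ofList_cons_mem_cyl haK l⟩,
      ha ▸ mk_ofList_mem_branchPartition hle i (a :: l)⟩

theorem exists_isTrimSet_subset_branchPartition (hle : ∀ p a, p ≤ step p a)
    (hstep : ∀ {p q}, p ≤ q → ∀ K : Finset α, ∃ a ∉ K, step p a = q)
    (w : ι × Branch α) (U : Set (ι × Branch α)) (hU : U ∈ 𝓝 w) :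
    ∃ p A, IsTrimSet (branchPartition step r) p A ∧ w ∈ A ∧ A ⊆ U := by
  obtain ⟨l, K, hS, hKU⟩ := exists_mem_prod_cyl_subset hU
  exact ⟨_, _, isTrimSet_prod_cyl hle hstep w.1 l K, ⟨rfl, hS⟩, hKU⟩

theorem exists_isTrimSet_mem_branchPartition (hle : ∀ p a, p ≤ step p a)
    (hstep : ∀ {p q}, p ≤ q → ∀ K : Finset α, ∃ a ∉ K, step p a = q)
    (p : P) (w : ι × Branch α) (hw : w ∈ branchPartition step r p) :
    ∃ A, IsTrimSet (branchPartition step r) p A ∧ w ∈ A := by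
  obtain ⟨⟨l, hl, rfl⟩, -⟩ := hw
  exact ⟨_, isTrimSet_prod_cyl hle hstep w.1 l ∅, rfl, hl, by simp⟩

theorem mem_branchPartition_of_forall_nhds (hle : ∀ p a, p ≤ step p a) (p : P) (w : ι × Branch α)
    (H : ∀ U ∈ 𝓝 w, ∃ A, IsTrimSet (branchPartition step r) p A ∧ w ∈ A ∧ A ⊆ U) :
    w ∈ branchPartition step r p := by
  have hbound : ∀ l, w.2.1 l → nodeLabel step (r w.1) l ≤ p := by
    intro l hl
    have hU : {w.1} ×ˢ cyl l ∅ ∈ 𝓝 w :=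
      ((isOpen_discrete _).prod (isClopen_cyl l ∅).isOpen).mem_nhds ⟨rfl, hl, by simp⟩
    obtain ⟨A, hA, -, hAU⟩ := H _ hU
    obtain ⟨⟨j, S⟩, hSA, hS⟩ : p ∈ ptype (branchPartition step r) A := by
      rw [hA.2.2]; exact self_mem_Ici
    obtain ⟨rfl, hSl⟩ := hAU hSA
    exact hS.2 l hSl.1
  obtain ⟨A, hA, hwA, -⟩ := H univ univ_mem
  obtain ⟨l, K, hS, hKA⟩ := exists_mem_prod_cyl_subset (hA.2.1.mem_nhds hwA)
  have hl : nodeLabel step (r w.1) l ∈ ptype (branchPartition step r) A :=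
    ⟨_, hKA (mk_mem_prod (mem_singleton w.1) (ofList_mem_cyl l K)),
      mk_ofList_mem_branchPartition hle w.1 l⟩
  rw [hA.2.2] at hl
  exact ⟨⟨l, hS.1, le_antisymm (hbound l hS.1) hl⟩, hbound⟩

end BranchPartition

open Classical in
/-- The index `j` supplies infinitely many letters realising each move `p ↦ q`, so excluding
finitely many children of a node never loses a label. -/
noncomputable def codeStep (e : P → ℕ) (p : P) (a : ℕ × ℕ) : P :=
  if h : ∃ q, e q = a.1 ∧ p ≤ q then h.choose else p

theorem le_codeStep (e : P → ℕ) (p : P) (a : ℕ × ℕ) : p ≤ codeStep e p a := by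
  unfold codeStep
  split_ifs with h
  exacts [h.choose_spec.2, le_rfl]

theorem exists_codeStep_eq {e : P → ℕ} (he : Function.Injective e) {p q : P} (hpq : p ≤ q)
    (K : Finset (ℕ × ℕ)) : ∃ a ∉ K, codeStep e p a = q := by
  obtain ⟨j, hj⟩ := (K.image Prod.snd).exists_notMem
  have h : ∃ q', e q' = e q ∧ p ≤ q' := ⟨q, rfl, hpq⟩
  refine ⟨(e q, j), fun hK => hj (Finset.mem_image_of_mem _ hK), ?_⟩
  rw [codeStep, dif_pos h]
  exact he h.choose_spec.1

/-- For a countable poset `P`, there is a compact Stone space admitting a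
trim `P`-partition iff `P` has a finite foundation (a finite set of elements below every
element of `P`). -/
theorem compact_trimPartition_iff_finiteFoundation [Countable P] :
    (∃ (W : Type) (_ : TopologicalSpace W),
        (LocallyCompactSpace W ∧ TotallyDisconnectedSpace W ∧ T2Space W ∧
          CompactSpace W) ∧
        ∃ X : P → Set W, IsPPartition X ∧
          (∀ w : W, ∀ U ∈ nhds w, ∃ p A, IsTrimSet X p A ∧ w ∈ A ∧ A ⊆ U) ∧
          (∀ p, ∀ x ∈ X p, ∃ A, IsTrimSet X p A ∧ x ∈ A) ∧
          (∀ p : P, ∀ w : W,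
            (∀ U ∈ nhds w, ∃ A, IsTrimSet X p A ∧ w ∈ A ∧ A ⊆ U) → w ∈ X p)) ↔
    ∃ F : Finset P, ∀ r : P, ∃ p ∈ F, p ≤ r := by
  constructor
  · rintro ⟨W, _, ⟨-, -, -, _⟩, X, hX, hbase, -, -⟩
    refine exists_finset_forall_le_of_compactSpace hX.nonempty fun w => ?_
    obtain ⟨p, A, hA, hwA, -⟩ := hbase w univ univ_mem
    exact ⟨p, A, hA, hwA⟩
  · rintro ⟨F, hF⟩
    obtain ⟨e, he⟩ := exists_injective_nat P
    let r : Fin F.card → P := fun i => F.equivFin.symm i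
    have hr : ∀ q, ∃ i, r i ≤ q := fun q => by
      obtain ⟨p, hp, hpq⟩ := hF q
      exact ⟨F.equivFin ⟨p, hp⟩, by simpa [r] using hpq⟩
    have hle := le_codeStep e
    exact ⟨Fin F.card × Branch (ℕ × ℕ), inferInstance,
      ⟨inferInstance, inferInstance, inferInstance, inferInstance⟩,
      branchPartition (codeStep e) r, isPPartition_branchPartition hle (exists_codeStep_eq he) hr,
      exists_isTrimSet_subset_branchPartition hle (exists_codeStep_eq he),
      exists_isTrimSet_mem_branchPartition hle (exists_codeStep_eq he),
      mem_branchPartition_of_forall_nhds hle⟩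
end
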